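/- arXiv:1207.0087 — 4 statements merged into one kernel-verified Lean document; each statement's English description precedes it below -/
import Mathlib

section
/- Let {π^i_j : B_i → B_{ij}}_{i≠j∈J} be a finite family of surjective algebra homomorphisms whose kernels generate a distributive lattice of ideals. If the family satisfies the cocycle condition, then for every index i the canonical projection from the multi-pullback algebra B^π to B_i is surjective. -/
open Function

/-- A set of ideals *generates a distributive lattice* iff it is contained in a
distributive sublattice of the lattice of ideals. -/
def GeneratesDistribLattice {A : Type*} [CommRing A] (s : Set (Ideal A)) : Prop :=
  ∃ L : Sublattice (Ideal A), (∀ I ∈ s, I ∈ L) ∧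
    ∀ x ∈ L, ∀ y ∈ L, ∀ z ∈ L, x ⊓ (y ⊔ z) = (x ⊓ y) ⊔ (x ⊓ z)

variable {J : Type*}

/-- Compatibility of `b i` and `b j`: `π^i_j (b i) = π^j_i (b j)`, where the
identification `B_{ij} = B_{ji}` is witnessed by the ring isomorphisms `e`. -/
def Compat (B : J → Type*) [∀ i, CommRing (B i)] (C : J → J → Type*)
    [∀ i j, CommRing (C i j)] (π : ∀ i j, B i →+* C i j)
    (e : ∀ i j, C i j ≃+* C j i) (i j : J) (bi : B i) (bj : B j) : Prop :=
  π i j bi = e j i (π j i bj)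

/-- A *distributive family*: all the homomorphisms `π^i_j` are surjective and, for each
`i`, the kernels `ker π^i_j` generate a distributive lattice of ideals of `B i`. -/
def DistribFamily (B : J → Type*) [∀ i, CommRing (B i)] (C : J → J → Type*)
    [∀ i j, CommRing (C i j)] (π : ∀ i j, B i →+* C i j) : Prop :=
  (∀ i j, i ≠ j → Surjective (π i j)) ∧
  ∀ i : J, GeneratesDistribLattice {I : Ideal (B i) | ∃ j, j ≠ i ∧ I = RingHom.ker (π i j)}

/-- The first cocycle condition: `π^i_j (ker π^i_k) = π^j_i (ker π^j_k)` for all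
distinct `i, j, k` (the right-hand side is transported to `C i j` by `e`). -/
def Cocycle1 (B : J → Type*) [∀ i, CommRing (B i)] (C : J → J → Type*)
    [∀ i j, CommRing (C i j)] (π : ∀ i j, B i →+* C i j)
    (e : ∀ i j, C i j ≃+* C j i) : Prop :=
  ∀ i j k : J, i ≠ j → i ≠ k → j ≠ k →
    Ideal.map (π i j) (RingHom.ker (π i k)) =
      Ideal.map ((e j i).toRingHom.comp (π j i)) (RingHom.ker (π j k))

/-- The second cocycle condition `φ^{ik}_j = φ^{ij}_k ∘ φ^{jk}_i`, expressed elementwise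
via the characterization
`φ^{ij}_k ([b_j]^j_{ik}) = [b_i]^i_{jk} ↔ π^i_j(b_i) - π^j_i(b_j) ∈ π^i_j(ker π^i_k)`. -/
def Cocycle2 (B : J → Type*) [∀ i, CommRing (B i)] (C : J → J → Type*)
    [∀ i j, CommRing (C i j)] (π : ∀ i j, B i →+* C i j)
    (e : ∀ i j, C i j ≃+* C j i) : Prop :=
  ∀ i j k : J, i ≠ j → i ≠ k → j ≠ k → ∀ (bi : B i) (bj : B j) (bk : B k),
    π j k bj - e k j (π k j bk) ∈ Ideal.map (π j k) (RingHom.ker (π j i)) →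
    π i j bi - e j i (π j i bj) ∈ Ideal.map (π i j) (RingHom.ker (π i k)) →
    π i k bi - e k i (π k i bk) ∈ Ideal.map (π i k) (RingHom.ker (π i j))

/-- The cocycle condition of Calow–Matthes. -/
def CocycleCondition (B : J → Type*) [∀ i, CommRing (B i)] (C : J → J → Type*)
    [∀ i j, CommRing (C i j)] (π : ∀ i j, B i →+* C i j)
    (e : ∀ i j, C i j ≃+* C j i) : Prop :=
  Cocycle1 B C π e ∧ Cocycle2 B C π e

/-- The two-element extension property: every compatible pair `(b_i, b_j)` extends by
some `b_k` compatible with both. -/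
def ExtendsPairs (B : J → Type*) [∀ i, CommRing (B i)] (C : J → J → Type*)
    [∀ i j, CommRing (C i j)] (π : ∀ i j, B i →+* C i j)
    (e : ∀ i j, C i j ≃+* C j i) : Prop :=
  ∀ i j k : J, i ≠ j → i ≠ k → j ≠ k → ∀ (bi : B i) (bj : B j),
    Compat B C π e i j bi bj →
    ∃ bk : B k, Compat B C π e i k bi bk ∧ Compat B C π e j k bj bk


/-!
An element of the multi-pullback extending `x ∈ B i` is built one index at a time. Given a
compatible family `(b_l)_{l ∈ S}` and a new index `k`, choose lifts `c_l ∈ B_k` of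
`π^l_k (b_l)`. The second cocycle condition says exactly that `c_l ≡ c_m` modulo
`ker π^k_l + ker π^k_m`, and distributivity of the kernel lattice is what makes the Chinese
remainder theorem hold for such pairwise congruences: there is `b_k` with `b_k ≡ c_l` modulo
`ker π^k_l` for every `l ∈ S`, i.e. `b_k` is compatible with every `b_l`.
-/

section DistribSublattice

variable {α : Type*} [Lattice α] {L : Sublattice α}

lemma Sublattice.sup_inf_left_of_inf_sup_left
    (hL : ∀ x ∈ L, ∀ y ∈ L, ∀ z ∈ L, x ⊓ (y ⊔ z) = (x ⊓ y) ⊔ (x ⊓ z))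
    {x y z : α} (hx : x ∈ L) (hy : y ∈ L) (hz : z ∈ L) :
    x ⊔ y ⊓ z = (x ⊔ y) ⊓ (x ⊔ z) := by
  let _ : DistribLattice L := DistribLattice.ofInfSupLe fun a b c => (hL a a.2 b b.2 c c.2).le
  exact congrArg Subtype.val (sup_inf_left (⟨x, hx⟩ : L) ⟨y, hy⟩ ⟨z, hz⟩)

lemma Sublattice.finset_inf_sup_right_of_inf_sup_left [OrderTop α]
    (hL : ∀ x ∈ L, ∀ y ∈ L, ∀ z ∈ L, x ⊓ (y ⊔ z) = (x ⊓ y) ⊔ (x ⊓ z))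
    {ι : Type*} {s : Finset ι} (hs : s.Nonempty) {f : ι → α} (hf : ∀ i ∈ s, f i ∈ L)
    {a : α} (ha : a ∈ L) :
    s.inf f ⊔ a = s.inf fun i => f i ⊔ a := by
  induction hs using Finset.Nonempty.cons_induction with
  | singleton i => simp
  | cons i s _ hs ih =>
    have hfs : ∀ j ∈ s, f j ∈ L := fun j hj => hf j (Finset.mem_cons_of_mem hj)
    have hinf : s.inf f ∈ L := L.infClosed.finsetInf_mem hs hfs
    rw [Finset.inf_cons, Finset.inf_cons, ← ih hfs, sup_comm,
      sup_inf_left_of_inf_sup_left hL ha (hf i (Finset.mem_cons_self i s)) hinf,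
      sup_comm a, sup_comm a]

end DistribSublattice

lemma Submodule.exists_forall_sub_mem_of_distrib {R M : Type*} [Ring R] [AddCommGroup M]
    [Module R M] {L : Sublattice (Submodule R M)}
    (hL : ∀ x ∈ L, ∀ y ∈ L, ∀ z ∈ L, x ⊓ (y ⊔ z) = (x ⊓ y) ⊔ (x ⊓ z))
    {ι : Type*} (s : Finset ι) {I : ι → Submodule R M} (hI : ∀ i ∈ s, I i ∈ L) {c : ι → M}
    (hc : ∀ i ∈ s, ∀ j ∈ s, c i - c j ∈ I i ⊔ I j) :
    ∃ x : M, ∀ i ∈ s, x - c i ∈ I i := by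
  induction s using Finset.cons_induction with
  | empty => exact ⟨0, by simp⟩
  | cons n s _ ih =>
    obtain ⟨x, hx⟩ := ih (fun i hi => hI i (Finset.mem_cons_of_mem hi))
      (fun i hi j hj => hc i (Finset.mem_cons_of_mem hi) j (Finset.mem_cons_of_mem hj))
    rcases s.eq_empty_or_nonempty with rfl | hs
    · exact ⟨c n, by simp⟩
    have hxn : x - c n ∈ s.inf I ⊔ I n := by
      rw [Sublattice.finset_inf_sup_right_of_inf_sup_left hL hs
        (fun i hi => hI i (Finset.mem_cons_of_mem hi)) (hI n (Finset.mem_cons_self n s)),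
        Submodule.mem_finsetInf]
      intro i hi
      have hcin := hc i (Finset.mem_cons_of_mem hi) n (Finset.mem_cons_self n s)
      simpa using add_mem (Submodule.mem_sup_left (hx i hi)) hcin
    obtain ⟨v, hv, w, hw, hvw⟩ := Submodule.mem_sup.1 hxn
    refine ⟨x - v, fun i hi => ?_⟩
    rcases Finset.mem_cons.1 hi with rfl | hi
    · rwa [sub_right_comm, ← hvw, add_sub_cancel_left]
    · rw [sub_right_comm]
      exact sub_mem (hx i hi) (Submodule.mem_finsetInf.1 hv i hi)

def CompatOn (B : J → Type*) [∀ i, CommRing (B i)] (C : J → J → Type*)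
    [∀ i j, CommRing (C i j)] (π : ∀ i j, B i →+* C i j)
    (e : ∀ i j, C i j ≃+* C j i) (S : Finset J) (b : ∀ l, B l) : Prop :=
  ∀ l ∈ S, ∀ m ∈ S, l ≠ m → Compat B C π e l m (b l) (b m)

section Extension

variable {B : J → Type*} [∀ i, CommRing (B i)] {C : J → J → Type*} [∀ i j, CommRing (C i j)]
  {π : ∀ i j, B i →+* C i j} {e : ∀ i j, C i j ≃+* C j i}

lemma Compat.symm (he : ∀ i j, e j i = (e i j).symm) {i j : J} {bi : B i} {bj : B j}
    (h : Compat B C π e i j bi bj) : Compat B C π e j i bj bi := by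
  unfold Compat at h ⊢
  rw [he] at h
  exact (RingEquiv.eq_symm_apply _).1 h |>.symm

lemma Cocycle2.sub_mem_ker_sup (hcoc2 : Cocycle2 B C π e) {k l m : J} (hkl : k ≠ l)
    (hkm : k ≠ m) (hlm : l ≠ m) (hsurj : Surjective (π k l)) {bl : B l} {bm : B m}
    (hml : Compat B C π e m l bm bl) {cl cm : B k} (hcl : Compat B C π e k l cl bl)
    (hcm : Compat B C π e k m cm bm) :
    cl - cm ∈ RingHom.ker (π k l) ⊔ RingHom.ker (π k m) := by
  have h := hcoc2 k m l hkm hkl hlm.symm cm bm bl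
    (by rw [hml, sub_self]; exact zero_mem _) (by rw [hcm, sub_self]; exact zero_mem _)
  rw [← hcl, ← map_sub, ← Ideal.mem_comap, Ideal.comap_map_of_surjective _ hsurj,
    ← RingHom.ker_eq_comap_bot, sup_comm] at h
  simpa using neg_mem h

lemma CompatOn.exists_compat (hdist : DistribFamily B C π) (hcoc2 : Cocycle2 B C π e)
    {S : Finset J} {b : ∀ l, B l} (hb : CompatOn B C π e S b) {k : J} (hk : k ∉ S) :
    ∃ bk : B k, ∀ l ∈ S, Compat B C π e k l bk (b l) := by
  obtain ⟨hsurj, hgen⟩ := hdist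
  obtain ⟨L, hLmem, hLdist⟩ := hgen k
  have hne : ∀ l ∈ S, l ≠ k := fun l hl => ne_of_mem_of_not_mem hl hk
  have hlift : ∀ l ∈ S, ∃ c : B k, Compat B C π e k l c (b l) :=
    fun l hl => hsurj k l (hne l hl).symm _
  choose! c hc using hlift
  obtain ⟨bk, hbk⟩ := Submodule.exists_forall_sub_mem_of_distrib hLdist S
    (I := fun l => RingHom.ker (π k l)) (fun l hl => hLmem _ ⟨l, hne l hl, rfl⟩) (c := c)
    (fun l hl m hm => by
      rcases eq_or_ne l m with rfl | hlm
      · simp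
      · exact hcoc2.sub_mem_ker_sup (hne l hl).symm (hne m hm).symm hlm
          (hsurj k l (hne l hl).symm) (hb m hm l hl hlm.symm) (hc l hl) (hc m hm))
  exact ⟨bk, fun l hl => ((RingHom.sub_mem_ker_iff _).1 (hbk l hl)).trans (hc l hl)⟩

lemma CompatOn.insert_update [DecidableEq J] (he : ∀ i j, e j i = (e i j).symm)
    {S : Finset J} {b : ∀ l, B l} (hb : CompatOn B C π e S b) {k : J} (hk : k ∉ S)
    {bk : B k} (hbk : ∀ l ∈ S, Compat B C π e k l bk (b l)) :
    CompatOn B C π e (insert k S) (update b k bk) := by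
  have hne : ∀ l ∈ S, l ≠ k := fun l hl => ne_of_mem_of_not_mem hl hk
  intro l hl m hm hlm
  rcases Finset.mem_insert.1 hl with rfl | hlS <;> rcases Finset.mem_insert.1 hm with rfl | hmS
  · exact absurd rfl hlm
  · rw [update_self, update_of_ne (hne m hmS)]
    exact hbk m hmS
  · rw [update_self, update_of_ne (hne l hlS)]
    exact (hbk l hlS).symm he
  · rw [update_of_ne (hne l hlS), update_of_ne (hne m hmS)]
    exact hb l hlS m hmS hlm

lemma CompatOn.exists_insert [DecidableEq J] (he : ∀ i j, e j i = (e i j).symm)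
    (hdist : DistribFamily B C π) (hcoc2 : Cocycle2 B C π e) {S : Finset J} {b : ∀ l, B l}
    (hb : CompatOn B C π e S b) (k : J) :
    ∃ b' : ∀ l, B l, CompatOn B C π e (insert k S) b' ∧ ∀ l ∈ S, b' l = b l := by
  by_cases hk : k ∈ S
  · exact ⟨b, by rwa [Finset.insert_eq_of_mem hk], fun _ _ => rfl⟩
  obtain ⟨bk, hbk⟩ := hb.exists_compat hdist hcoc2 hk
  exact ⟨update b k bk, hb.insert_update he hk hbk,
    fun l hl => update_of_ne (ne_of_mem_of_not_mem hl hk) _ _⟩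

lemma exists_compatOn_insert [DecidableEq J] (he : ∀ i j, e j i = (e i j).symm)
    (hdist : DistribFamily B C π) (hcoc2 : Cocycle2 B C π e) (i : J) (x : B i)
    (S : Finset J) : ∃ b : ∀ l, B l, CompatOn B C π e (insert i S) b ∧ b i = x := by
  induction S using Finset.induction_on with
  | empty => exact ⟨Pi.single i x, fun l hl m hm hlm => by simp_all, Pi.single_eq_same i x⟩
  | insert k S _ ih =>
    obtain ⟨b, hb, hbi⟩ := ih
    obtain ⟨b', hb', hb'b⟩ := hb.exists_insert he hdist hcoc2 k
    exact ⟨b', Finset.insert_comm i k S ▸ hb', (hb'b i (Finset.mem_insert_self i S)).trans hbi⟩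

end Extension

/-- a distributive family satisfying the cocycle condition has all
canonical projections from the multi-pullback surjective. -/
theorem stmt0 [Fintype J] (B : J → Type*) [∀ i, CommRing (B i)]
    (C : J → J → Type*) [∀ i j, CommRing (C i j)]
    (π : ∀ i j, B i →+* C i j) (e : ∀ i j, C i j ≃+* C j i)
    (he : ∀ i j, e j i = (e i j).symm)
    (hdist : DistribFamily B C π)
    (hcoc : CocycleCondition B C π e)
    (i : J) (x : B i) :
    ∃ b : ∀ l, B l, (∀ l m, l ≠ m → Compat B C π e l m (b l) (b m)) ∧ b i = x := by
  classical
  obtain ⟨b, hb, hbi⟩ := exists_compatOn_insert he hdist hcoc.2 i x Finset.univ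
  exact ⟨b, fun l m => hb l (by simp) m (by simp), hbi⟩
end

section
/- Let {π^i_j : B_i → B_{ij}} be a distributive family of surjective algebra homomorphisms indexed by a finite set J. If for all distinct i,j,k ∈ J and all b_i ∈ B_i, b_j ∈ B_j with π^i_j(b_i) = π^j_i(b_j) there exists b_k ∈ B_k with π^i_k(b_i) = π^k_i(b_k) and π^j_k(b_j) = π^k_j(b_k), then π^i_k(ker π^i_j) = π^k_i(ker π^k_j) for all distinct i,j,k. -/
open Function

variable {J : Type*}

section

variable {B : J → Type*} [∀ i, CommRing (B i)] {C : J → J → Type*} [∀ i j, CommRing (C i j)]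
  {π : ∀ i j, B i →+* C i j} {e : ∀ i j, C i j ≃+* C j i}

/- Extend the compatible pair `(b_i, 0)`, with `b_i ∈ ker π^i_j`: the resulting `b_k` lies in
`ker π^k_j` and has the same image as `b_i` in `B_{ik}`. -/
theorem map_ker_le_of_extendsPairs (hext : ExtendsPairs B C π e) {i j k : J}
    (hij : i ≠ j) (hik : i ≠ k) (hjk : j ≠ k) :
    Ideal.map (π i k) (RingHom.ker (π i j)) ≤
      Ideal.map ((e k i).toRingHom.comp (π k i)) (RingHom.ker (π k j)) := by
  rw [Ideal.map_le_iff_le_comap]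
  intro bi hbi
  obtain ⟨bk, hik_compat, hjk_compat⟩ := hext i j k hij hik hjk bi 0
    (by simp [Compat, RingHom.mem_ker.mp hbi])
  have hbk : bk ∈ RingHom.ker (π k j) := by
    rw [Compat, map_zero, eq_comm, map_eq_zero_iff _ (e k j).injective] at hjk_compat
    exact hjk_compat
  rw [Ideal.mem_comap, hik_compat]
  exact Ideal.mem_map_of_mem ((e k i).toRingHom.comp (π k i)) hbk

end

theorem stmt1_general (B : J → Type*) [∀ i, CommRing (B i)]
    (C : J → J → Type*) [∀ i j, CommRing (C i j)]
    (π : ∀ i j, B i →+* C i j) (e : ∀ i j, C i j ≃+* C j i)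
    (he : ∀ i j, e j i = (e i j).symm)
    (hext : ExtendsPairs B C π e) :
    ∀ i j k : J, i ≠ j → i ≠ k → j ≠ k →
      Ideal.map (π i k) (RingHom.ker (π i j)) =
        Ideal.map ((e k i).toRingHom.comp (π k i)) (RingHom.ker (π k j)) := by
  intro i j k hij hik hjk
  refine le_antisymm (map_ker_le_of_extendsPairs hext hij hik hjk) ?_
  calc Ideal.map ((e k i).toRingHom.comp (π k i)) (RingHom.ker (π k j))
      = Ideal.map (e k i) (Ideal.map (π k i) (RingHom.ker (π k j))) :=
        (Ideal.map_map _ _).symm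
    _ ≤ Ideal.map (e k i)
          (Ideal.map ((e i k).toRingHom.comp (π i k)) (RingHom.ker (π i j))) :=
        Ideal.map_mono (map_ker_le_of_extendsPairs hext hjk.symm hik.symm hij.symm)
    _ = Ideal.map (π i k) (RingHom.ker (π i j)) := by
        rw [← Ideal.map_map, he]
        exact Ideal.map_of_equiv (e i k)

/-- for a distributive family, the two-element extension property implies
the first cocycle condition `π^i_k (ker π^i_j) = π^k_i (ker π^k_j)`. -/
theorem stmt1 [Fintype J] (B : J → Type*) [∀ i, CommRing (B i)]
    (C : J → J → Type*) [∀ i j, CommRing (C i j)]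
    (π : ∀ i j, B i →+* C i j) (e : ∀ i j, C i j ≃+* C j i)
    (he : ∀ i j, e j i = (e i j).symm)
    (hdist : DistribFamily B C π)
    (hext : ExtendsPairs B C π e) :
    ∀ i j k : J, i ≠ j → i ≠ k → j ≠ k →
      Ideal.map (π i k) (RingHom.ker (π i j)) =
        Ideal.map ((e k i).toRingHom.comp (π k i)) (RingHom.ker (π k j)) :=
  stmt1_general B C π e he hext
end

section
/- Let B_1 = B_2 = B_3 = C([-1,1], ℝ) and define π^1_2 = π^2_1 = π^1_3 = π^3_1 : f ↦ f(1) into ℝ, and π^2_3 : f ↦ (f(−1), f(1)), π^3_2 : f ↦ (f(1), f(−1)) into ℝ × ℝ. Then the canonical projection from the multi-pullback algebra B^π to B_2 is not surjective. -/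
noncomputable section

/-- The interval `[-1, 1]`. -/
abbrev II : Set ℝ := Set.Icc (-1 : ℝ) 1

/-- The point `1 ∈ [-1, 1]`. -/
def p1 : II := ⟨1, by norm_num⟩

/-- The point `-1 ∈ [-1, 1]`. -/
def pm1 : II := ⟨-1, by norm_num⟩

/-- for `B_1 = B_2 = B_3 = C([-1,1],ℝ)` with `π^1_2 = π^2_1 = π^1_3 = π^3_1 :
f ↦ f(1)`, `π^2_3 : f ↦ (f(-1), f(1))` and `π^3_2 : f ↦ (f(1), f(-1))`, the canonical
projection from the multi-pullback `B^π` to `B_2` is not surjective. -/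
theorem stmt5 :
    ¬ Function.Surjective
      (fun b : {t : C(II, ℝ) × C(II, ℝ) × C(II, ℝ) //
          t.1 p1 = t.2.1 p1 ∧ t.1 p1 = t.2.2 p1 ∧
          ((t.2.1 pm1, t.2.1 p1) : ℝ × ℝ) = (t.2.2 p1, t.2.2 pm1)} =>
        b.val.2.1) := by
  intro hsurj
  obtain ⟨⟨⟨b₁, b₂, b₃⟩, h₁₂, h₁₃, h₂₃⟩, hb₂⟩ := hsurj ⟨Subtype.val, continuous_subtype_val⟩
  have hb₂_endpoints : b₂ pm1 = b₂ p1 := by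
    rw [(Prod.mk.inj h₂₃).1, ← h₁₃, h₁₂]
  subst hb₂
  norm_num [pm1, p1] at hb₂_endpoints
end
end

section
/- Let B_1 = B_2 = B_3 = C([-1,1], ℝ), B_{12} = B_{13} = ℝ, B_{23} = ℝ × ℝ, with π^1_2 = π^2_1 = π^1_3 = π^3_1 : f ↦ f(1) and π^2_3 = π^3_2 : f ↦ (f(−1), f(1)). Then for all distinct i,j,k ∈ {1,2,3} and all b_i ∈ B_i, b_j ∈ B_j with π^i_j(b_i) = π^j_i(b_j), there exists b_k ∈ B_k with π^i_k(b_i) = π^k_i(b_k) and π^j_k(b_j) = π^k_j(b_k). -/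
noncomputable section

/-- for the family with `π^1_2 = π^2_1 = π^1_3 = π^3_1 : f ↦ f(1)` and
`π^2_3 = π^3_2 : f ↦ (f(-1), f(1))`, the two-element extension property holds: for all
distinct `i, j, k ∈ {1,2,3}` and every compatible pair `(b_i, b_j)` there is a
compatible `b_k` (all six ordered choices of `(i, j, k)` are listed). -/
theorem stmt9 :
    (∀ b1 b2 : C(II, ℝ), b1 p1 = b2 p1 →
      ∃ b3 : C(II, ℝ), b1 p1 = b3 p1 ∧
        ((b2 pm1, b2 p1) : ℝ × ℝ) = (b3 pm1, b3 p1)) ∧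
    (∀ b2 b1 : C(II, ℝ), b2 p1 = b1 p1 →
      ∃ b3 : C(II, ℝ), ((b2 pm1, b2 p1) : ℝ × ℝ) = (b3 pm1, b3 p1) ∧
        b1 p1 = b3 p1) ∧
    (∀ b1 b3 : C(II, ℝ), b1 p1 = b3 p1 →
      ∃ b2 : C(II, ℝ), b1 p1 = b2 p1 ∧
        ((b3 pm1, b3 p1) : ℝ × ℝ) = (b2 pm1, b2 p1)) ∧
    (∀ b3 b1 : C(II, ℝ), b3 p1 = b1 p1 →
      ∃ b2 : C(II, ℝ), ((b3 pm1, b3 p1) : ℝ × ℝ) = (b2 pm1, b2 p1) ∧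
        b1 p1 = b2 p1) ∧
    (∀ b2 b3 : C(II, ℝ), ((b2 pm1, b2 p1) : ℝ × ℝ) = (b3 pm1, b3 p1) →
      ∃ b1 : C(II, ℝ), b2 p1 = b1 p1 ∧ b3 p1 = b1 p1) ∧
    (∀ b3 b2 : C(II, ℝ), ((b3 pm1, b3 p1) : ℝ × ℝ) = (b2 pm1, b2 p1) →
      ∃ b1 : C(II, ℝ), b3 p1 = b1 p1 ∧ b2 p1 = b1 p1) := by
  exact ⟨fun b1 b2 h => ⟨b2, h, rfl⟩,
    fun b2 b1 h => ⟨b2, rfl, h.symm⟩,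
    fun b1 b3 h => ⟨b3, h, rfl⟩,
    fun b3 b1 h => ⟨b3, rfl, h.symm⟩,
    fun b2 b3 h => ⟨b2, rfl, (congrArg Prod.snd h).symm⟩,
    fun b3 b2 h => ⟨b2, congrArg Prod.snd h, rfl⟩⟩
end
end
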